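/- arXiv:1207.2649 — 3 statements merged into one kernel-verified Lean document; each statement's English description precedes it below -/
import Mathlib

section
/- Let G be a primitive permutation group on an infinite set X that is not 2-homogeneous. Then there exists a G-invariant graph Γ with vertex set X such that for all distinct x, y ∈ X the symmetric difference Γ(x) △ Γ(y) of neighbour sets is infinite. -/
/-!
Suppose, for a contradiction, that every `G`-invariant graph `Γ` has some pair `x ≠ y` with
`Γ(x) ∆ Γ(y)` finite. Having finite symmetric difference of neighbourhoods is a `G`-invariant
equivalence relation, so by primitivity it is universal for every invariant graph.

If an invariant graph `Λ` has an edge, it is connected by primitivity, and applying the hypothesis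
to the graph "the distance in `Λ` is odd" shows that adjacent vertices `x, y` are equidistant from
almost every vertex. Then no vertex `p` has finite degree: a vertex `z` equidistant from `p` and
all neighbours of `p` cannot exist, since a geodesic from `p` to `z` passes through a neighbour.

Applying this to the invariant graph "`|Γ(x) ∆ Γ(y)| ≤ j`" (which has an edge for suitable `j`),
any two vertices have a common neighbour there, so `|Γ(x) ∆ Γ(y)| ≤ 2 j` for all `x, y`. A graph
with uniformly bounded neighbourhood symmetric differences has every neighbourhood finite or
cofinite. For the orbital graph of a pair not in the orbit of another pair, both the graph and its
complement have an edge, so neither alternative is possible.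
-/

open scoped symmDiff

section

variable {X : Type*}

namespace SimpleGraph

variable {V W : Type*} {G : SimpleGraph V} {G' : SimpleGraph W} {u v : V}

lemma Reachable.dist_map_le (f : G →g G') (h : G.Reachable u v) :
    G'.dist (f u) (f v) ≤ G.dist u v := by
  obtain ⟨w, hw⟩ := h.exists_walk_length_eq_dist
  calc G'.dist (f u) (f v) ≤ (w.map f).length := dist_le _
    _ = G.dist u v := by rw [Walk.length_map, hw]

lemma Iso.dist_eq (φ : G ≃g G') (u v : V) : G'.dist (φ u) (φ v) = G.dist u v := by
  by_cases h : G.Reachable u v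
  · refine le_antisymm (h.dist_map_le φ.toHom) ?_
    simpa using (h.map φ.toHom).dist_map_le φ.symm.toHom
  · rw [dist_eq_zero_of_not_reachable h,
      dist_eq_zero_of_not_reachable (Iso.reachable_iff.not.mpr h)]

lemma exists_adj_adj_of_symmDiff_finite {x y : V} (hx : (G.neighborSet x).Infinite)
    (hxy : (G.neighborSet x ∆ G.neighborSet y).Finite) : ∃ z, G.Adj x z ∧ G.Adj y z := by
  obtain ⟨z, hzx, hzy⟩ := (hx.sdiff (hxy.subset fun z hz => Or.inl hz)).nonempty
  exact ⟨z, hzx, by_contra fun h => hzy ⟨hzx, h⟩⟩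

/-- Distances from adjacent vertices differ by at most one, so they differ exactly when their
parities do. -/
lemma Adj.finite_setOf_dist_ne {x y : V} (hxy : G.Adj x y)
    (hfin : ((fromRel fun u v => Odd (G.dist u v)).neighborSet x ∆
      (fromRel fun u v => Odd (G.dist u v)).neighborSet y).Finite) :
    {z | G.dist x z ≠ G.dist y z}.Finite := by
  refine (hfin.union (Set.toFinite {x, y})).subset fun z hz => ?_
  by_cases hz' : z = x ∨ z = y
  · exact Or.inr hz'
  push Not at hz'
  have hparity : (Odd (G.dist z x) ↔ ¬ Odd (G.dist z y)) := by
    have := hxy.diff_dist_adj (u := z)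
    simp only [Set.mem_ofPred_eq, dist_comm (u := x), dist_comm (u := y)] at hz
    rcases this with h | h | h
    · exact absurd h.symm hz
    · rw [h, Nat.odd_add_one, not_not]
    · rw [show G.dist z x = G.dist z y + 1 by omega, Nat.odd_add_one]
  left
  simp only [Set.mem_symmDiff, mem_neighborSet, fromRel_adj, ne_eq, dist_comm (v := z)]
  tauto

lemma Connected.neighborSet_infinite [Infinite V] (hG : G.Connected)
    (hequi : ∀ x y, G.Adj x y → {z | G.dist x z ≠ G.dist y z}.Finite) (p : V) :
    (G.neighborSet p).Infinite := by
  intro hp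
  have hE : (insert p (⋃ q ∈ G.neighborSet p, {z | G.dist p z ≠ G.dist q z})).Finite :=
    (hp.biUnion fun q hq => hequi p q hq).insert p
  obtain ⟨z, hz⟩ := hE.infinite_compl.nonempty
  simp only [Set.mem_compl_iff, Set.mem_insert_iff, Set.mem_iUnion, not_or, not_exists] at hz
  obtain ⟨w, hw⟩ := hG.exists_walk_length_eq_dist p z
  cases w with
  | nil => exact hz.1 rfl
  | @cons _ q _ hpq w =>
    have hqz : G.dist q z ≤ w.length := dist_le w
    have : G.dist p z = G.dist q z := by simpa using hz.2 q hpq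
    rw [Walk.length_cons] at hw
    omega

/-- Otherwise take `S ⊆ N(x₀)ᶜ` with `B + 1` elements and `u ∈ N(x₀)` outside `N(v) ∆ N(x₀)` for
all `v ∈ S`: then `S ⊆ N(u) ∆ N(x₀)`. -/
lemma neighborSet_finite_or_compl_finite (B : ℕ) (x₀ : V)
    (hB : ∀ x, (G.neighborSet x ∆ G.neighborSet x₀).encard ≤ B) :
    (G.neighborSet x₀).Finite ∨ (G.neighborSet x₀)ᶜ.Finite := by
  by_contra! h
  obtain ⟨hN, hNc⟩ := h
  obtain ⟨S, hS, hScard⟩ :=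
    Set.exists_subset_encard_eq (hNc.encard_eq ▸ le_top : (B + 1 : ℕ∞) ≤ _)
  have hSfin : S.Finite := Set.finite_of_encard_eq_coe hScard
  have hUfin : (⋃ v ∈ S, G.neighborSet v ∆ G.neighborSet x₀).Finite :=
    hSfin.biUnion fun v _ => Set.finite_of_encard_le_coe (hB v)
  obtain ⟨u, hu, huU⟩ := (hN.sdiff hUfin).nonempty
  simp only [Set.mem_iUnion, not_exists] at huU
  have hSsub : S ⊆ G.neighborSet u ∆ G.neighborSet x₀ := fun v hv =>
    have huv : G.Adj v u := by_contra fun h => huU v hv (Or.inr ⟨hu, h⟩)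
    Or.inl ⟨huv.symm, hS hv⟩
  have := (Set.encard_le_encard hSsub).trans (hB u)
  rw [hScard] at this
  norm_cast at this
  omega

end SimpleGraph

def Subgroup.IsPrimitive (G : Subgroup (Equiv.Perm X)) : Prop :=
  ∀ r : Setoid X, (∀ g ∈ G, ∀ x y : X, r.r x y → r.r (g x) (g y)) →
    (∀ x y : X, r.r x y → x = y) ∨ (∀ x y : X, r.r x y)

def SimpleGraph.IsInvariant (G : Subgroup (Equiv.Perm X)) (Γ : SimpleGraph X) : Prop :=
  ∀ g ∈ G, ∀ x y : X, Γ.Adj x y ↔ Γ.Adj (g x) (g y)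

def SimpleGraph.orbitalGraph (G : Subgroup (Equiv.Perm X)) (a b : X) : SimpleGraph X :=
  fromRel fun x y => ∃ g ∈ G, g a = x ∧ g b = y

namespace SimpleGraph

variable {G : Subgroup (Equiv.Perm X)} {Γ : SimpleGraph X} {g : Equiv.Perm X}

def IsInvariant.toIso (hΓ : Γ.IsInvariant G) (hg : g ∈ G) : Γ ≃g Γ :=
  ⟨g, (hΓ g hg _ _).symm⟩

lemma IsInvariant.neighborSet_apply (hΓ : Γ.IsInvariant G) (hg : g ∈ G) (x : X) :
    Γ.neighborSet (g x) = g '' Γ.neighborSet x := by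
  ext y
  rw [Equiv.image_eq_preimage_symm, Set.mem_preimage, mem_neighborSet, mem_neighborSet,
    hΓ g hg x, Equiv.apply_symm_apply]

lemma IsInvariant.reachable_apply (hΓ : Γ.IsInvariant G) (hg : g ∈ G) {x y : X} :
    Γ.Reachable (g x) (g y) ↔ Γ.Reachable x y :=
  (hΓ.toIso hg).reachable_iff

lemma IsInvariant.dist_apply (hΓ : Γ.IsInvariant G) (hg : g ∈ G) (x y : X) :
    Γ.dist (g x) (g y) = Γ.dist x y :=
  (hΓ.toIso hg).dist_eq x y

lemma IsInvariant.encard_symmDiff_apply (hΓ : Γ.IsInvariant G) (hg : g ∈ G) (x y : X) :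
    (Γ.neighborSet (g x) ∆ Γ.neighborSet (g y)).encard =
      (Γ.neighborSet x ∆ Γ.neighborSet y).encard := by
  rw [hΓ.neighborSet_apply hg, hΓ.neighborSet_apply hg, ← Set.image_symmDiff g.injective,
    g.injective.encard_image]

lemma IsInvariant.compl (hΓ : Γ.IsInvariant G) : Γᶜ.IsInvariant G := fun g hg x y => by
  simp only [compl_adj, ne_eq, g.injective.eq_iff, hΓ g hg x y]

lemma isInvariant_fromRel {r : X → X → Prop} (hr : ∀ g ∈ G, ∀ x y, r x y ↔ r (g x) (g y)) :
    (fromRel r).IsInvariant G := fun g hg x y => by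
  simp only [fromRel_adj, ne_eq, g.injective.eq_iff, hr g hg x y, hr g hg y x]

lemma isInvariant_orbitalGraph (a b : X) : (orbitalGraph G a b).IsInvariant G := by
  refine isInvariant_fromRel fun g hg x y => ⟨?_, ?_⟩
  · rintro ⟨h, hh, rfl, rfl⟩
    exact ⟨g * h, mul_mem hg hh, rfl, rfl⟩
  · rintro ⟨h, hh, hx, hy⟩
    exact ⟨g⁻¹ * h, mul_mem (inv_mem hg) hh, by simp [hx], by simp [hy]⟩

lemma orbitalGraph_adj {a b : X} (hab : a ≠ b) : (orbitalGraph G a b).Adj a b :=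
  ⟨hab, Or.inl ⟨1, one_mem G, rfl, rfl⟩⟩

lemma exists_image_eq_of_orbitalGraph_adj [DecidableEq X] {a b c d : X}
    (h : (orbitalGraph G a b).Adj c d) : ∃ g ∈ G, ({a, b} : Finset X).image g = {c, d} := by
  obtain ⟨-, ⟨g, hg, rfl, rfl⟩ | ⟨g, hg, rfl, rfl⟩⟩ := h
  · exact ⟨g, hg, by simp⟩
  · exact ⟨g, hg, by simp [Finset.pair_comm]⟩

end SimpleGraph

namespace Subgroup.IsPrimitive

open SimpleGraph

variable {G : Subgroup (Equiv.Perm X)} {Γ : SimpleGraph X}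

lemma connected (hG : G.IsPrimitive) (hΓ : Γ.IsInvariant G) {p q : X} (hpq : Γ.Adj p q) :
    Γ.Connected :=
  have : Nonempty X := ⟨p⟩
  ⟨(hG Γ.reachableSetoid fun _ hg _ _ h => (hΓ.reachable_apply hg).mpr h).resolve_left
    fun h => hpq.ne (h p q hpq.reachable)⟩

lemma symmDiff_finite_or_infinite (hG : G.IsPrimitive) (hΓ : Γ.IsInvariant G) :
    (∀ x y, (Γ.neighborSet x ∆ Γ.neighborSet y).Finite) ∨
      ∀ x y, x ≠ y → (Γ.neighborSet x ∆ Γ.neighborSet y).Infinite := by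
  let r : Setoid X :=
    ⟨fun x y => (Γ.neighborSet x ∆ Γ.neighborSet y).Finite,
      ⟨fun x => by simp, fun h => by rwa [symmDiff_comm],
        fun h₁ h₂ => (h₁.union h₂).subset (symmDiff_triangle _ _ _)⟩⟩
  refine (hG r fun g hg x y h => ?_).symm.imp_right fun h x y hxy hfin => hxy (h x y hfin)
  change (Γ.neighborSet (g x) ∆ Γ.neighborSet (g y)).Finite
  rw [hΓ.neighborSet_apply hg, hΓ.neighborSet_apply hg, ← Set.image_symmDiff g.injective]
  exact h.image g

variable [Infinite X]

lemma neighborSet_infinite (hG : G.IsPrimitive)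
    (hfin : ∀ Λ : SimpleGraph X, Λ.IsInvariant G →
      ∀ x y, (Λ.neighborSet x ∆ Λ.neighborSet y).Finite)
    {Λ : SimpleGraph X} (hΛ : Λ.IsInvariant G)
    {p q : X} (hpq : Λ.Adj p q) (x : X) : (Λ.neighborSet x).Infinite := by
  have hodd : (fromRel fun u v => Odd (Λ.dist u v)).IsInvariant G :=
    isInvariant_fromRel fun g hg u v => by rw [hΛ.dist_apply hg]
  exact (hG.connected hΛ hpq).neighborSet_infinite
    (fun u v huv => huv.finite_setOf_dist_ne (hfin _ hodd u v)) x

lemma exists_encard_symmDiff_le (hG : G.IsPrimitive)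
    (hfin : ∀ Λ : SimpleGraph X, Λ.IsInvariant G →
      ∀ x y, (Λ.neighborSet x ∆ Λ.neighborSet y).Finite)
    (hΓ : Γ.IsInvariant G) :
    ∃ B : ℕ, ∀ x y, (Γ.neighborSet x ∆ Γ.neighborSet y).encard ≤ B := by
  obtain ⟨x₁, y₁, hxy₁⟩ := exists_pair_ne X
  set k : X → X → ℕ∞ := fun x y => (Γ.neighborSet x ∆ Γ.neighborSet y).encard with hk
  obtain ⟨j, hj⟩ := ENat.ne_top_iff_exists.mp (hfin Γ hΓ x₁ y₁).encard_lt_top.ne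
  let Δ := fromRel fun x y => k x y ≤ j
  have hΔ : Δ.IsInvariant G :=
    isInvariant_fromRel fun g hg x y => by simp only [hk, hΓ.encard_symmDiff_apply hg]
  have hΔk : ∀ u v, Δ.Adj u v → k u v ≤ j := by
    rintro u v ⟨-, h | h⟩
    · exact h
    · simp only [hk] at h ⊢
      rwa [symmDiff_comm]
  refine ⟨2 * j, fun x y => ?_⟩
  obtain ⟨z, hxz, hyz⟩ := exists_adj_adj_of_symmDiff_finite
    (hG.neighborSet_infinite hfin hΔ (show Δ.Adj x₁ y₁ from ⟨hxy₁, Or.inl hj.ge⟩) x)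
    (hfin Δ hΔ x y)
  calc k x y ≤ k x z + k z y :=
        (Set.encard_le_encard (symmDiff_triangle _ _ _)).trans (Set.encard_union_le _ _)
    _ ≤ j + j := add_le_add (hΔk _ _ hxz) (hΔk _ _ hyz.symm)
    _ = ↑(2 * j) := by push_cast; ring

end Subgroup.IsPrimitive

end

theorem stmt9_general {X : Type*} [Infinite X] [DecidableEq X] (G : Subgroup (Equiv.Perm X))
    (hprim : ∀ r : Setoid X, (∀ g ∈ G, ∀ x y : X, r.r x y → r.r (g x) (g y)) →
      (∀ x y : X, r.r x y → x = y) ∨ (∀ x y : X, r.r x y))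
    (hnot2hom : ¬ ∀ s t : Finset X, s.card = 2 → t.card = 2 → ∃ g ∈ G, s.image g = t) :
    ∃ Γ : SimpleGraph X,
      (∀ g ∈ G, ∀ x y : X, Γ.Adj x y ↔ Γ.Adj (g x) (g y)) ∧
      ∀ x y : X, x ≠ y → (symmDiff (Γ.neighborSet x) (Γ.neighborSet y)).Infinite := by
  open SimpleGraph in
  have hG : G.IsPrimitive := hprim
  by_contra hno
  have hfin : ∀ Λ : SimpleGraph X, Λ.IsInvariant G →
      ∀ x y, (Λ.neighborSet x ∆ Λ.neighborSet y).Finite := fun Λ hΛ =>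
    (hG.symmDiff_finite_or_infinite hΛ).resolve_right fun h => hno ⟨Λ, hΛ, h⟩
  push Not at hnot2hom
  obtain ⟨s, t, hs, ht, hst⟩ := hnot2hom
  obtain ⟨a, b, hab, rfl⟩ := Finset.card_eq_two.mp hs
  obtain ⟨c, d, hcd, rfl⟩ := Finset.card_eq_two.mp ht
  have hΓ := isInvariant_orbitalGraph (G := G) a b
  have hΓc : (orbitalGraph G a b)ᶜ.Adj c d :=
    ⟨hcd, fun h => (exists_image_eq_of_orbitalGraph_adj h).elim fun g ⟨hg, h⟩ => hst g hg h⟩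
  obtain ⟨B, hB⟩ := hG.exists_encard_symmDiff_le hfin hΓ
  rcases neighborSet_finite_or_compl_finite B a fun x => hB x a with h | h
  · exact hG.neighborSet_infinite hfin hΓ (orbitalGraph_adj hab) a h
  · refine hG.neighborSet_infinite hfin hΓ.compl hΓc a (h.subset ?_)
    rw [neighborSet_compl]
    exact Set.sdiff_subset

/-- G primitive, not 2-homogeneous, on infinite X; then some G-invariant graph Γ
    has Γ(x) △ Γ(y) infinite for all distinct x, y. -/
theorem stmt9 {X : Type*} [Infinite X] [DecidableEq X] (G : Subgroup (Equiv.Perm X))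
    (htrans : ∀ x y : X, ∃ g ∈ G, g x = y)
    (hprim : ∀ r : Setoid X, (∀ g ∈ G, ∀ x y : X, r.r x y → r.r (g x) (g y)) →
      (∀ x y : X, r.r x y → x = y) ∨ (∀ x y : X, r.r x y))
    (hnot2hom : ¬ ∀ s t : Finset X, s.card = 2 → t.card = 2 → ∃ g ∈ G, s.image g = t) :
    ∃ Γ : SimpleGraph X,
      (∀ g ∈ G, ∀ x y : X, Γ.Adj x y ↔ Γ.Adj (g x) (g y)) ∧
      ∀ x y : X, x ≠ y → (symmDiff (Γ.neighborSet x) (Γ.neighborSet y)).Infinite :=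
  stmt9_general G hprim hnot2hom
end

section
/- Let T = (X, →) be a tournament, A a good subset of X, and B ≠ A a maximal good subset with A ∩ B ≠ ∅. Then A ⊆ B; consequently any good set and a maximal good set are either disjoint or nested. -/
def IsTournament {X : Type*} (r : X → X → Prop) : Prop :=
  (∀ x, ¬ r x x) ∧ ∀ x y : X, x ≠ y → (r x y ↔ ¬ r y x)

def IsNice {X : Type*} (r : X → X → Prop) (A : Set X) : Prop :=
  A.Nonempty ∧ ∀ a₁ ∈ A, ∀ a₂ ∈ A, ∀ v ∉ A, (r a₁ v ↔ r a₂ v)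

def IsGood {X : Type*} (r : X → X → Prop) (A : Set X) : Prop :=
  IsNice r A ∧ ∀ x ∈ A, ∀ y ∈ A, ∀ z ∈ A, r x y → r y z → r x z

def IsMaxGood {X : Type*} (r : X → X → Prop) (A : Set X) : Prop :=
  IsGood r A ∧ ∀ B : Set X, IsGood r B → A ⊆ B → A = B

lemma key1 {X : Type*} {r : X → X → Prop} (_ht : IsTournament r) {S : Set X}
    (hS : IsGood r S) {x y : X} (hx : x ∈ S) (hy : y ∈ S) (z : X)
    (hxy : r x y) (hyz : r y z) : r x z := by
  by_cases hz : z ∈ S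
  · exact hS.2 x hx y hy z hz hxy hyz
  · exact (hS.1.2 y hy x hx z hz).mp hyz

lemma key2 {X : Type*} {r : X → X → Prop} (ht : IsTournament r) {S : Set X}
    (hS : IsGood r S) {x z : X} (hx : x ∈ S) (hz : z ∈ S) (y : X)
    (hxy : r x y) (hyz : r y z) : r x z := by
  by_cases hy : y ∈ S
  · exact hS.2 x hx y hy z hz hxy hyz
  · have h1 : r z y := (hS.1.2 x hx z hz y hy).mp hxy
    have hne : y ≠ z := fun h => hy (h ▸ hz)
    exact absurd h1 ((ht.2 y z hne).mp hyz)

lemma key3 {X : Type*} {r : X → X → Prop} (ht : IsTournament r) {S : Set X}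
    (hS : IsGood r S) {y z : X} (hy : y ∈ S) (hz : z ∈ S) (x : X)
    (hxy : r x y) (hyz : r y z) : r x z := by
  by_cases hx : x ∈ S
  · exact hS.2 x hx y hy z hz hxy hyz
  · have hnyx : ¬ r y x := by
      have hne : x ≠ y := fun h => hx (h ▸ hy)
      exact (ht.2 x y hne).mp hxy
    have hnzx : ¬ r z x := fun h => hnyx ((hS.1.2 z hz y hy x hx).mp h)
    have hne : x ≠ z := fun h => hx (h ▸ hz)
    exact (ht.2 x z hne).mpr hnzx

lemma union_good {X : Type*} {r : X → X → Prop} (ht : IsTournament r) {A B : Set X}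
    (hA : IsGood r A) (hB : IsGood r B) {d : X} (hdA : d ∈ A) (hdB : d ∈ B) :
    IsGood r (A ∪ B) := by
  constructor
  · constructor
    · exact ⟨d, Or.inl hdA⟩
    · intro a₁ h₁ a₂ h₂ v hv
      have hvA : v ∉ A := fun h => hv (Or.inl h)
      have hvB : v ∉ B := fun h => hv (Or.inr h)
      have e : ∀ a ∈ A ∪ B, (r a v ↔ r d v) := by
        intro a ha
        cases ha with
        | inl h => exact hA.1.2 a h d hdA v hvA
        | inr h => exact hB.1.2 a h d hdB v hvB
      exact (e a₁ h₁).trans (e a₂ h₂).symm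
  · intro x hx y hy z hz hxy hyz
    rcases hx with hx | hx <;> rcases hy with hy | hy <;> rcases hz with hz | hz
    · exact hA.2 x hx y hy z hz hxy hyz
    · exact key1 ht hA hx hy z hxy hyz
    · exact key2 ht hA hx hz y hxy hyz
    · exact key3 ht hB hy hz x hxy hyz
    · exact key3 ht hA hy hz x hxy hyz
    · exact key2 ht hB hx hz y hxy hyz
    · exact key1 ht hB hx hy z hxy hyz
    · exact hB.2 x hx y hy z hz hxy hyz

/-- a good set meeting a different maximal good set is contained in it. -/
theorem stmt14 {X : Type*} (r : X → X → Prop) (ht : IsTournament r) (A B : Set X)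
    (hA : IsGood r A) (hB : IsMaxGood r B) (hne : A ≠ B) (hint : (A ∩ B).Nonempty) :
    A ⊆ B := by
  obtain ⟨d, hdA, hdB⟩ := hint
  have hU : IsGood r (A ∪ B) := union_good ht hA hB.1 hdA hdB
  have h : B = A ∪ B := hB.2 (A ∪ B) hU Set.subset_union_right
  rw [h]
  exact Set.subset_union_left
end

section
/- Let T be an infinite tournament whose automorphism group is 2-homogeneous (transitive on unordered 2-subsets of vertices). Then for all distinct vertices x, y, both Γ⁺(x) \ Γ⁺(y) and Γ⁺(y) \ Γ⁺(x) are infinite, unless T is a total order; consequently (if T is not a linear order) T is cofinally rigid. -/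
open Finset

namespace IsTournament

variable {X : Type*} {r : X → X → Prop}

theorem ne_of_rel (ht : IsTournament r) {x y : X} (h : r x y) : x ≠ y := by
  rintro rfl
  exact ht.1 x h

theorem asymm (ht : IsTournament r) {x y : X} (h : r x y) : ¬ r y x :=
  (ht.2 x y (ht.ne_of_rel h)).mp h

theorem rel_of_not_rel (ht : IsTournament r) {x y : X} (hne : x ≠ y) (h : ¬ r x y) : r y x :=
  (ht.2 y x hne.symm).mpr h

theorem rel_or_rel (ht : IsTournament r) {x y : X} (hne : x ≠ y) : r x y ∨ r y x :=
  or_iff_not_imp_left.2 (ht.rel_of_not_rel hne)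

/-- Finite Ramsey theorem for tournaments; `l` lists a transitive subtournament in its order. -/
theorem exists_pairwise_of_pow_le_card (ht : IsTournament r) :
    ∀ (n : ℕ) (S : Finset X), 2 ^ n ≤ #S →
      ∃ l : List X, l.length = n ∧ (∀ x ∈ l, x ∈ S) ∧ l.Pairwise r
  | 0, _, _ => ⟨[], rfl, by simp, .nil⟩
  | n + 1, S, hS => by
    classical
    obtain ⟨v, hv⟩ : S.Nonempty := card_pos.1 (lt_of_lt_of_le (by positivity) hS)
    have hsplit := card_filter_add_card_filter_not (s := S.erase v) (r v ·)
    rw [card_erase_of_mem hv] at hsplit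
    rw [pow_succ] at hS
    by_cases hout : 2 ^ n ≤ #((S.erase v).filter (r v ·))
    · obtain ⟨l, hlen, hlS, hl⟩ := ht.exists_pairwise_of_pow_le_card n _ hout
      refine ⟨v :: l, by simp [hlen], ?_, List.pairwise_cons.2 ⟨?_, hl⟩⟩
      · simpa [hv] using fun x hx => (mem_erase.1 (mem_filter.1 (hlS x hx)).1).2
      · exact fun x hx => (mem_filter.1 (hlS x hx)).2
    · obtain ⟨l, hlen, hlS, hl⟩ :=
        ht.exists_pairwise_of_pow_le_card n ((S.erase v).filter (¬ r v ·)) (by omega)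
      refine ⟨l ++ [v], by simp [hlen], ?_, List.pairwise_append.2 ⟨hl, by simp, ?_⟩⟩
      · simpa [hv, or_imp, forall_and] using fun x hx => (mem_erase.1 (mem_filter.1 (hlS x hx)).1).2
      · simp only [List.mem_singleton, forall_eq]
        intro x hx
        obtain ⟨hxS, hvx⟩ := mem_filter.1 (hlS x hx)
        exact ht.rel_of_not_rel (mem_erase.1 hxS).1.symm hvx

theorem exists_pairwise_of_infinite (ht : IsTournament r) {A : Set X} (hA : A.Infinite) (n : ℕ) :
    ∃ l : List X, l.length = n ∧ (∀ x ∈ l, x ∈ A) ∧ l.Pairwise r := by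
  classical
  obtain ⟨S, hSA, hS⟩ := hA.exists_subset_card_eq (2 ^ n)
  obtain ⟨l, hlen, hlS, hl⟩ := ht.exists_pairwise_of_pow_le_card n S hS.ge
  exact ⟨l, hlen, fun x hx => hSA (hlS x hx), hl⟩

theorem nodup_of_pairwise (ht : IsTournament r) {l : List X} (hl : l.Pairwise r) : l.Nodup :=
  hl.imp ht.ne_of_rel

end IsTournament

section OutNeighbourhoods

variable {X : Type*} {r : X → X → Prop}

theorem Set.infinite_of_forall_exists_finset_card_eq {s : Set X}
    (h : ∀ n : ℕ, ∃ t : Finset X, ↑t ⊆ s ∧ #t = n) : s.Infinite := by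
  intro hs
  obtain ⟨t, hts, htn⟩ := h (#hs.toFinset + 1)
  have := Finset.card_le_card (hs.subset_toFinset.2 hts)
  omega

def IsArcTransitive (r : X → X → Prop) : Prop :=
  ∀ ⦃a b c d : X⦄, r a b → r c d →
    ∃ g : Equiv.Perm X, (∀ x y, r x y ↔ r (g x) (g y)) ∧ g a = c ∧ g b = d

theorem IsTournament.isArcTransitive (ht : IsTournament r)
    (h2hom : ∀ a b c d : X, a ≠ b → c ≠ d → ∃ f : Equiv.Perm X,
      (∀ x y : X, r x y ↔ r (f x) (f y)) ∧ ({f a, f b} : Set X) = {c, d}) :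
    IsArcTransitive r := by
  intro a b c d hab hcd
  obtain ⟨g, hg, hgab⟩ := h2hom a b c d (ht.ne_of_rel hab) (ht.ne_of_rel hcd)
  rcases Set.pair_eq_pair_iff.1 hgab with ⟨hga, hgb⟩ | ⟨hga, hgb⟩
  · exact ⟨g, hg, hga, hgb⟩
  · exact absurd (hga ▸ hgb ▸ (hg a b).1 hab) (ht.asymm hcd)

theorem infinite_outNbhd_diff_map_iff {g : Equiv.Perm X} (hg : ∀ x y, r x y ↔ r (g x) (g y))
    (x y : X) :
    ({v | r (g x) v} \ {v | r (g y) v}).Infinite ↔ ({v | r x v} \ {v | r y v}).Infinite := by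
  have : g.symm '' ({v | r (g x) v} \ {v | r (g y) v}) = {v | r x v} \ {v | r y v} := by
    ext v
    rw [Equiv.image_symm_eq_preimage]
    simp only [Set.mem_preimage, Set.mem_sdiff, Set.mem_ofPred_eq, ← hg]
  rw [← this, Set.infinite_image_iff g.symm.injective.injOn]

theorem IsTournament.infinite_outNbhd_diff_of_rel [Infinite X] (ht : IsTournament r)
    (harc : IsArcTransitive r) {x y : X} (hxy : r x y) :
    ({v | r x v} \ {v | r y v}).Infinite := by
  classical
  refine Set.infinite_of_forall_exists_finset_card_eq fun n => ?_
  obtain ⟨l, hlen, -, hl⟩ := ht.exists_pairwise_of_infinite Set.infinite_univ (n + 2)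
  obtain ⟨a, l, rfl⟩ := l.exists_of_length_succ hlen
  obtain ⟨m, b, rfl⟩ := l.eq_nil_or_concat'.resolve_left (by rintro rfl; simp at hlen)
  simp only [List.pairwise_cons, List.pairwise_append, List.mem_append, List.mem_singleton,
    or_imp, forall_and, forall_eq] at hl
  obtain ⟨⟨ham, hab⟩, hm, -, hmb⟩ := hl
  obtain ⟨g, hg, rfl, rfl⟩ := harc hab hxy
  refine ⟨(m.map g).toFinset, ?_, ?_⟩
  · intro v hv
    obtain ⟨z, hz, rfl⟩ := List.mem_map.1 (List.mem_toFinset.1 hv)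
    exact ⟨(hg a z).1 (ham z hz), fun hbz => ht.asymm (hmb z hz) ((hg b z).2 hbz)⟩
  · rw [List.toFinset_card_of_nodup ((ht.nodup_of_pairwise hm).map g.injective), List.length_map]
    simpa using hlen

theorem IsTournament.exists_cycle (ht : IsTournament r)
    (hnl : ¬ ∀ x y z : X, r x y → r y z → r x z) :
    ∃ x y z : X, r x y ∧ r y z ∧ r z x := by
  push Not at hnl
  obtain ⟨x, y, z, hxy, hyz, hxz⟩ := hnl
  have hxz' : x ≠ z := by
    rintro rfl
    exact ht.asymm hxy hyz
  exact ⟨x, y, z, hxy, hyz, ht.rel_of_not_rel hxz' hxz⟩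

theorem IsTournament.infinite_outNbhd_diff_of_rel_swap [Infinite X] (ht : IsTournament r)
    (harc : IsArcTransitive r) (hnl : ¬ ∀ x y z : X, r x y → r y z → r x z) {x y : X}
    (hxy : r x y) : ({v | r y v} \ {v | r x v}).Infinite := by
  obtain ⟨x₀, y₀, z₀, hxy₀, hyz₀, hzx₀⟩ := ht.exists_cycle hnl
  have hsplit : {v | r y₀ v} \ {v | r z₀ v} ⊆
      ({v | r y₀ v} \ {v | r x₀ v}) ∪ ({v | r x₀ v} \ {v | r z₀ v}) := by
    rintro v ⟨hy₀v, hz₀v⟩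
    by_cases hx₀v : r x₀ v
    exacts [Or.inr ⟨hx₀v, hz₀v⟩, Or.inl ⟨hy₀v, hx₀v⟩]
  have transfer : ∀ {a b}, r a b → ({v | r b v} \ {v | r a v}).Infinite →
      ({v | r y v} \ {v | r x v}).Infinite := fun hab hD => by
    obtain ⟨g, hg, rfl, rfl⟩ := harc hab hxy
    exact (infinite_outNbhd_diff_map_iff hg _ _).2 hD
  rcases Set.infinite_union.1 ((ht.infinite_outNbhd_diff_of_rel harc hyz₀).mono hsplit) with h | h
  exacts [transfer hxy₀ h, transfer hzx₀ h]

theorem IsTournament.infinite_outNbhd_diff [Infinite X] (ht : IsTournament r)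
    (harc : IsArcTransitive r) (hnl : ¬ ∀ x y z : X, r x y → r y z → r x z) {x y : X}
    (hne : x ≠ y) : ({v | r x v} \ {v | r y v}).Infinite := by
  rcases ht.rel_or_rel hne with hxy | hyx
  exacts [ht.infinite_outNbhd_diff_of_rel harc hxy,
    ht.infinite_outNbhd_diff_of_rel_swap harc hnl hyx]

end OutNeighbourhoods

section Modules

variable {X : Type*} {r : X → X → Prop}

def IsModuleOf (r : X → X → Prop) (S M : Set X) : Prop :=
  ∀ y ∈ S, y ∉ M → ∀ m ∈ M, ∀ m' ∈ M, r y m ↔ r y m'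

def IsTransOn (r : X → X → Prop) (M : Set X) : Prop :=
  ∀ ⦃x⦄, x ∈ M → ∀ ⦃y⦄, y ∈ M → ∀ ⦃z⦄, z ∈ M → r x y → r y z → r x z

def IsAutomorphismOn (r : X → X → Prop) (S : Set X) (g : Equiv.Perm X) : Prop :=
  (∀ x, g x ∈ S ↔ x ∈ S) ∧ ∀ a ∈ S, ∀ b ∈ S, r a b ↔ r (g a) (g b)

theorem IsTournament.isTransOn_of_pairwise (ht : IsTournament r) {l : List X}
    (hl : l.Pairwise r) : IsTransOn r {x | x ∈ l} := by
  have hidx : ∀ i j (hi : i < l.length) (hj : j < l.length), r l[i] l[j] → i < j := by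
    intro i j hi hj hij
    rcases lt_trichotomy i j with h | rfl | h
    · exact h
    · exact absurd hij (ht.1 _)
    · exact absurd (List.pairwise_iff_getElem.1 hl j i hj hi h) (ht.asymm hij)
  rintro _ hx _ hy _ hz hxy hyz
  obtain ⟨i, hi, rfl⟩ := List.mem_iff_getElem.1 hx
  obtain ⟨j, hj, rfl⟩ := List.mem_iff_getElem.1 hy
  obtain ⟨k, hk, rfl⟩ := List.mem_iff_getElem.1 hz
  exact List.pairwise_iff_getElem.1 hl i k hi hk ((hidx i j hi hj hxy).trans (hidx j k hj hk hyz))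

theorem IsModuleOf.union {S M N : Set X} (hM : IsModuleOf r S M) (hN : IsModuleOf r S N)
    (hMN : (M ∩ N).Nonempty) : IsModuleOf r S (M ∪ N) := by
  obtain ⟨p, hpM, hpN⟩ := hMN
  have hp : ∀ y ∈ S, y ∉ M ∪ N → ∀ m ∈ M ∪ N, r y m ↔ r y p := by
    rintro y hy hyMN m (hm | hm)
    exacts [hM y hy (fun h => hyMN (.inl h)) m hm p hpM,
      hN y hy (fun h => hyMN (.inr h)) m hm p hpN]
  exact fun y hy hyMN m hm m' hm' => (hp y hy hyMN m hm).trans (hp y hy hyMN m' hm').symm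

theorem IsModuleOf.not_cycle (ht : IsTournament r) {S M : Set X} (hM : IsModuleOf r S M)
    (hMt : IsTransOn r M) {x y z : X} (hx : x ∈ M) (hy : y ∈ M) (hz : z ∈ S) (hxy : r x y)
    (hyz : r y z) (hzx : r z x) : False := by
  by_cases hzM : z ∈ M
  · exact ht.asymm (hMt hx hy hzM hxy hyz) hzx
  · exact ht.asymm hyz ((hM z hz hzM x hx y hy).1 hzx)

theorem IsTransOn.union (ht : IsTournament r) {S M N : Set X} (hMS : M ⊆ S) (hNS : N ⊆ S)
    (hM : IsModuleOf r S M) (hN : IsModuleOf r S N) (hMt : IsTransOn r M)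
    (hNt : IsTransOn r N) : IsTransOn r (M ∪ N) := by
  intro x hx y hy z hz hxy hyz
  by_contra hxz
  have hzx : r z x := ht.rel_of_not_rel (fun h => ht.asymm hxy (h ▸ hyz)) hxz
  have hS := Set.union_subset hMS hNS
  have hxS := hS hx
  have hyS := hS hy
  have hzS := hS hz
  -- two of the three vertices lie in `M` or two in `N`
  rcases hx with hx | hx <;> rcases hy with hy | hy <;> rcases hz with hz | hz <;>
  first
  | exact hM.not_cycle ht hMt hx hy hzS hxy hyz hzx
  | exact hN.not_cycle ht hNt hx hy hzS hxy hyz hzx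
  | exact hM.not_cycle ht hMt hy hz hxS hyz hzx hxy
  | exact hN.not_cycle ht hNt hy hz hxS hyz hzx hxy
  | exact hM.not_cycle ht hMt hz hx hyS hzx hxy hyz
  | exact hN.not_cycle ht hNt hz hx hyS hzx hxy hyz

end Modules

section Automorphisms

variable {X : Type*} {r : X → X → Prop} {g : Equiv.Perm X}

theorem IsAutomorphismOn.restrict {S V : Set X} (hg : IsAutomorphismOn r V g) (hSV : S ⊆ V)
    (hfix : ∀ x ∈ V, x ∉ S → g x = x) : IsAutomorphismOn r S g := by
  refine ⟨fun x => ⟨fun hgx => ?_, fun hx => ?_⟩, fun a ha b hb => hg.2 a (hSV ha) b (hSV hb)⟩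
  · by_contra hx
    rw [hfix x ((hg.1 x).1 (hSV hgx)) hx] at hgx
    exact hx hgx
  · by_contra hgx
    have hggx := hfix (g x) ((hg.1 x).2 (hSV hx)) hgx
    rw [g.injective hggx] at hgx
    exact hgx hx

theorem IsModuleOf.image {S M : Set X} (hg : IsAutomorphismOn r S g) (hMS : M ⊆ S)
    (hM : IsModuleOf r S M) : IsModuleOf r S (g '' M) := by
  rintro y hy hyM _ ⟨m, hm, rfl⟩ _ ⟨m', hm', rfl⟩
  have hy' : g.symm y ∈ S := (hg.1 _).1 (by rwa [g.apply_symm_apply])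
  have hyM' : g.symm y ∉ M := fun h => hyM ⟨_, h, g.apply_symm_apply y⟩
  rw [← g.apply_symm_apply y, ← hg.2 _ hy' m (hMS hm), ← hg.2 _ hy' m' (hMS hm')]
  exact hM _ hy' hyM' m hm m' hm'

theorem IsTransOn.image {S M : Set X} (hg : IsAutomorphismOn r S g) (hMS : M ⊆ S)
    (hMt : IsTransOn r M) : IsTransOn r (g '' M) := by
  rintro _ ⟨x, hx, rfl⟩ _ ⟨y, hy, rfl⟩ _ ⟨z, hz, rfl⟩ hxy hyz
  rw [← hg.2 x (hMS hx) y (hMS hy)] at hxy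
  rw [← hg.2 y (hMS hy) z (hMS hz)] at hyz
  exact (hg.2 x (hMS hx) z (hMS hz)).1 (hMt hx hy hz hxy hyz)

/-- Scores (out-degrees) in a transitive tournament are pairwise distinct and preserved by
automorphisms. -/
theorem IsTransOn.eq_self_of_image_eq [DecidableEq X] (ht : IsTournament r) {M : Finset X}
    (hMt : IsTransOn r M) (hg : ∀ a ∈ M, ∀ b ∈ M, r a b ↔ r (g a) (g b))
    (hgM : M.image g = M) : ∀ x ∈ M, g x = x := by
  classical
  let score x := #(M.filter (r x ·))
  have score_lt : ∀ {x y}, x ∈ M → y ∈ M → r x y → score y < score x := by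
    intro x y hx hy hxy
    refine card_lt_card ⟨fun z hz => ?_, fun h => ?_⟩
    · rw [mem_filter] at hz ⊢
      exact ⟨hz.1, hMt hx hy hz.1 hxy hz.2⟩
    · exact ht.1 y (mem_filter.1 (h (mem_filter.2 ⟨hy, hxy⟩))).2
  have score_map : ∀ x ∈ M, score (g x) = score x := by
    intro x hx
    have : M.filter (r (g x) ·) = (M.filter (r x ·)).image g := by
      conv_lhs => rw [← hgM]
      rw [filter_image]
      exact congrArg _ (filter_congr fun y hy => (hg x hx y hy).symm)
    simp only [score, this, card_image_of_injective _ g.injective]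
  intro x hx
  by_contra hne
  have hgx : g x ∈ M := hgM ▸ mem_image_of_mem g hx
  rcases ht.rel_or_rel hne with h | h
  · exact (score_lt hgx hx h).ne (score_map x hx).symm
  · exact (score_lt hx hgx h).ne (score_map x hx)

/-- A transitive module `Z` containing more than half of the vertices of a finite tournament is
fixed pointwise by every automorphism: the largest transitive module `M ⊇ Z` meets its image
under the automorphism, so their union is again a transitive module, forcing `g M = M`. -/
theorem IsAutomorphismOn.eq_self_of_isModuleOf (ht : IsTournament r) {S Z : Finset X}
    (hg : IsAutomorphismOn r S g) (hZS : Z ⊆ S) (hZ : IsModuleOf r S Z) (hZt : IsTransOn r Z)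
    (hcard : #S < 2 * #Z) : ∀ z ∈ Z, g z = z := by
  classical
  obtain ⟨M, hMc, hMmax⟩ := (S.powerset.filter fun M : Finset X =>
      IsModuleOf r S M ∧ IsTransOn r M ∧ Z ⊆ M).exists_max_image card
    ⟨Z, mem_filter.2 ⟨mem_powerset.2 hZS, hZ, hZt, subset_rfl⟩⟩
  simp only [mem_filter, mem_powerset, and_imp] at hMc hMmax
  obtain ⟨hMS, hM, hMt, hZM⟩ := hMc
  have hgMS : M.image g ⊆ S := by
    intro _ hgx
    obtain ⟨x, hx, rfl⟩ := mem_image.1 hgx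
    exact (hg.1 x).2 (hMS hx)
  have hgM : IsModuleOf r S ↑(M.image g) := by
    rw [coe_image]
    exact hM.image hg (coe_subset.2 hMS)
  have hgMt : IsTransOn r ↑(M.image g) := by
    rw [coe_image]
    exact hMt.image hg (coe_subset.2 hMS)
  have hcardg : #(M.image g) = #M := card_image_of_injective _ g.injective
  have hmeet : (M ∩ M.image g).Nonempty :=
    inter_nonempty_of_card_lt_card_add_card hMS hgMS (by have := card_le_card hZM; omega)
  have hunion : #(M ∪ M.image g) ≤ #M := by
    refine hMmax _ (union_subset hMS hgMS) ?_ ?_ (hZM.trans subset_union_left)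
    · rw [coe_union]
      exact hM.union hgM (by rwa [← coe_inter, coe_nonempty])
    · rw [coe_union]
      exact hMt.union ht (coe_subset.2 hMS) (coe_subset.2 hgMS) hM hgM hgMt
  have himage : M.image g = M := by
    refine eq_of_subset_of_card_le ?_ hcardg.ge
    exact union_eq_left.1 (eq_of_subset_of_card_le subset_union_left hunion).symm
  exact fun z hz => hMt.eq_self_of_image_eq ht (fun a ha b hb => hg.2 a (hMS ha) b (hMS hb))
    himage z (hZM hz)

end Automorphisms

section CofinalRigidity

variable {X : Type*} {r : X → X → Prop}

theorem exists_infinite_subset_forall_iff (W : Finset X) {A : Set X} (hA : A.Infinite) :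
    ∃ B ⊆ A, B.Infinite ∧ ∀ w ∈ W, ∀ z ∈ B, ∀ z' ∈ B, r w z ↔ r w z' := by
  have := hA.to_subtype
  let pattern : A → W → Prop := fun z w => r w z
  obtain ⟨p, hp⟩ := Finite.exists_infinite_fiber pattern
  refine ⟨Subtype.val '' (pattern ⁻¹' {p}), Subtype.coe_image_subset _ _,
    (Set.infinite_coe_iff.1 hp).image Subtype.val_injective.injOn, ?_⟩
  rintro w hw _ ⟨z, hz, rfl⟩ _ ⟨z', hz', rfl⟩
  exact Iff.of_eq (congrFun (hz.trans hz'.symm) ⟨w, hw⟩)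

theorem IsTournament.exists_transOn_isModuleOf [DecidableEq X] (ht : IsTournament r)
    (hD : ∀ a b : X, a ≠ b → ({v | r a v} \ {v | r b v} : Set X).Infinite)
    (W : Finset X) {a b : X} (hab : a ≠ b) (n : ℕ) :
    ∃ Z : Finset X, Disjoint W Z ∧ #Z = n ∧ (∀ z ∈ Z, r a z ∧ ¬ r b z) ∧ IsTransOn r Z ∧
      IsModuleOf r ↑(W ∪ Z) Z := by
  obtain ⟨B, hBD, hB, hBW⟩ :=
    exists_infinite_subset_forall_iff (r := r) W ((hD a b hab).sdiff W.finite_toSet)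
  obtain ⟨l, hlen, hlB, hl⟩ := ht.exists_pairwise_of_infinite hB n
  have hlD : ∀ z ∈ l.toFinset, z ∈ ({v | r a v} \ {v | r b v} : Set X) \ W :=
    fun z hz => hBD (hlB z (List.mem_toFinset.1 hz))
  refine ⟨l.toFinset, disjoint_right.2 fun z hz => (hlD z hz).2, ?_, fun z hz => (hlD z hz).1,
    ?_, ?_⟩
  · rw [List.toFinset_card_of_nodup (ht.nodup_of_pairwise hl), hlen]
  · rw [List.coe_toFinset]
    exact ht.isTransOn_of_pairwise hl
  · intro y hy hyZ z hz z' hz'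
    have hyW : y ∈ W := (mem_union.1 hy).resolve_right hyZ
    exact hBW y hyW z (hlB z (List.mem_toFinset.1 hz)) z' (hlB z' (List.mem_toFinset.1 hz'))

/-- `V` adds to `W`, for each pair `(a, b) ∈ P` in turn, a transitive module of
`Γ⁺(a) \ Γ⁺(b)` larger than everything before it; backwards from the last one, each of these
modules is fixed pointwise. -/
theorem IsTournament.exists_superset_eq_self_outside [DecidableEq X] (ht : IsTournament r)
    (hD : ∀ a b : X, a ≠ b → ({v | r a v} \ {v | r b v} : Set X).Infinite)
    (P : Finset (X × X)) (hP : ∀ p ∈ P, p.1 ≠ p.2) (W : Finset X) :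
    ∃ V : Finset X, W ⊆ V ∧
      (∀ g, IsAutomorphismOn r V g → ∀ x ∈ V, x ∉ W → g x = x) ∧
      ∀ p ∈ P, ∃ z ∈ V, z ∉ W ∧ r p.1 z ∧ ¬ r p.2 z := by
  induction P using Finset.induction_on generalizing W with
  | empty => exact ⟨W, subset_rfl, fun _ _ x hx hxW => absurd hx hxW, by simp⟩
  | insert p P _ ih =>
    obtain ⟨Z, hWZ, hZcard, hZab, hZt, hZ⟩ :=
      ht.exists_transOn_isModuleOf hD W (hP p (mem_insert_self p P)) (#W + 1)
    obtain ⟨V, hV, hfix, hsep⟩ := ih (fun q hq => hP q (mem_insert_of_mem hq)) (W ∪ Z)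
    refine ⟨V, subset_union_left.trans hV, fun g hg x hxV hxW => ?_, fun q hq => ?_⟩
    · by_cases hx : x ∈ W ∪ Z
      · have hcard : #(W ∪ Z) < 2 * #Z := by
          have := card_union_le W Z
          omega
        exact (hg.restrict (coe_subset.2 hV) (hfix g hg)).eq_self_of_isModuleOf ht
          subset_union_right hZ hZt hcard x ((mem_union.1 hx).resolve_left hxW)
      · exact hfix g hg x hxV hx
    · rcases mem_insert.1 hq with rfl | hq
      · obtain ⟨z, hz⟩ : Z.Nonempty := card_pos.1 (by omega)
        exact ⟨z, hV (mem_union_right _ hz), disjoint_right.1 hWZ hz, hZab z hz⟩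
      · obtain ⟨z, hzV, hzW, hsep⟩ := hsep q hq
        exact ⟨z, hzV, fun h => hzW (mem_union_left _ h), hsep⟩

theorem IsTournament.exists_rigid_superset (ht : IsTournament r)
    (hD : ∀ a b : X, a ≠ b → ({v | r a v} \ {v | r b v} : Set X).Infinite) (U : Finset X) :
    ∃ V : Finset X, U ⊆ V ∧
      ∀ f : {x // x ∈ V} ≃ {x // x ∈ V},
        (∀ a b : {x // x ∈ V}, r (a : X) (b : X) ↔ r (f a : X) (f b : X)) →
        ∀ a : {x // x ∈ V}, f a = a := by
  classical
  obtain ⟨V, hUV, hfix, hsep⟩ :=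
    ht.exists_superset_eq_self_outside hD U.offDiag (fun p hp => (mem_offDiag.1 hp).2.2) U
  refine ⟨V, hUV, fun f hf => ?_⟩
  let g := Equiv.Perm.ofSubtype f
  have hg : IsAutomorphismOn r V g := by
    refine ⟨Equiv.Perm.ofSubtype_apply_mem_iff_mem f, fun a ha b hb => ?_⟩
    simpa only [g, Equiv.Perm.ofSubtype_apply_of_mem f ha, Equiv.Perm.ofSubtype_apply_of_mem f hb]
      using hf ⟨a, ha⟩ ⟨b, hb⟩
  have hgV : ∀ x ∈ V, g x = x := by
    intro x hxV
    by_cases hxU : x ∈ U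
    · by_contra hgx
      have hgxU : g x ∈ U := by
        by_contra h
        exact hgx (g.injective (hfix g hg (g x) ((hg.1 x).2 hxV) h))
      obtain ⟨z, hzV, hzU, hxz, hgxz⟩ := hsep (x, g x) (mem_offDiag.2 ⟨hxU, hgxU, Ne.symm hgx⟩)
      rw [hg.2 x hxV z hzV, hfix g hg z hzV hzU] at hxz
      exact hgxz hxz
    · exact hfix g hg x hxV hxU
  exact fun a => Subtype.ext ((Equiv.Perm.ofSubtype_apply_coe f a).symm.trans (hgV a a.2))

end CofinalRigidity

/-- if the automorphism group of an infinite tournament is 2-homogeneous and the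
    tournament is not a total order, then all out-neighbour set differences are infinite and
    the tournament is cofinally rigid. -/
theorem stmt16 {X : Type*} [Infinite X] (r : X → X → Prop) (ht : IsTournament r)
    (h2hom : ∀ a b c d : X, a ≠ b → c ≠ d → ∃ f : Equiv.Perm X,
      (∀ x y : X, r x y ↔ r (f x) (f y)) ∧ ({f a, f b} : Set X) = {c, d})
    (hnl : ¬ ∀ x y z : X, r x y → r y z → r x z) :
    (∀ x y : X, x ≠ y →
      ({v | r x v} \ {v | r y v} : Set X).Infinite ∧
      ({v | r y v} \ {v | r x v} : Set X).Infinite) ∧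
    (∀ U : Finset X, ∃ V : Finset X, U ⊆ V ∧
      ∀ f : {x // x ∈ V} ≃ {x // x ∈ V},
        (∀ a b : {x // x ∈ V}, r (a : X) (b : X) ↔ r (f a : X) (f b : X)) →
        ∀ a : {x // x ∈ V}, f a = a) := by
  have hD : ∀ x y : X, x ≠ y → ({v | r x v} \ {v | r y v} : Set X).Infinite :=
    fun _ _ => ht.infinite_outNbhd_diff (ht.isArcTransitive h2hom) hnl
  exact ⟨fun x y hxy => ⟨hD x y hxy, hD y x hxy.symm⟩, ht.exists_rigid_superset hD⟩
end
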